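/- arXiv:1810.04393 — 2 statements merged into one kernel-verified Lean document; each statement's English description precedes it below -/
import Mathlib

section
/- Let n ≥ 1, n < p < ∞, and let x0, y0 ∈ ℝⁿ be distinct. Let u, v : ℝⁿ → ℝ be differentiable with ∫_{ℝⁿ} ‖∇u‖^p dx < ∞ and ∫_{ℝⁿ} ‖∇v‖^p dx < ∞, and suppose there exist constants c_u, c_v ∈ ℝ such that u satisfies the weak p-Laplace identity at (x0, y0) with constant c_u and v satisfies the weak p-Laplace identity at (x0, y0) with constant c_v. If u(x0) = v(x0) and u(y0) = v(y0), then u(x) = v(x) for all x ∈ ℝⁿ. -/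
open MeasureTheory RealInnerProductSpace

/-- `u` satisfies the weak p-Laplace identity at the distinct points `x0, y0` with
constant `c`. -/
def WeakPLaplace (n : ℕ) (p : ℝ) (u : EuclideanSpace ℝ (Fin n) → ℝ)
    (x0 y0 : EuclideanSpace ℝ (Fin n)) (c : ℝ) : Prop :=
  ∀ φ : EuclideanSpace ℝ (Fin n) → ℝ, Differentiable ℝ φ →
    Integrable (fun x => ‖gradient φ x‖ ^ p) →
      Integrable (fun x => ‖gradient u x‖ ^ (p - 2) * ⟪gradient u x, gradient φ x⟫) ∧
      ∫ x, ‖gradient u x‖ ^ (p - 2) * ⟪gradient u x, gradient φ x⟫ = c * (φ x0 - φ y0)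

/-!
Test both identities with `w = u - v`, which vanishes at `x0` and `y0`, and subtract: the
integral of `(|∇u|^(p-2) ∇u - |∇v|^(p-2) ∇v) · (∇u - ∇v)` is `0`. Since `p > n ≥ 1`, the map
`a ↦ |a|^(p-2) a` is strictly monotone, so the integrand is nonnegative and vanishes only where
`∇u = ∇v`; hence `∇w = 0` almost everywhere. A differentiable function with this property is
constant: by Fubini, almost every segment ending at a given point meets the null set where
`∇w ≠ 0` in a null set of times, so `w` takes the same value at both ends of such a segment, and
any two points are joined through a common third one.
-/

open AffineMap

theorem norm_rpow_mul_inner_sub_pos {F : Type*} [NormedAddCommGroup F] [InnerProductSpace ℝ F]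
    {p : ℝ} (hp : 1 < p) {a b : F} (hab : a ≠ b) :
    0 < ‖a‖ ^ (p - 2) * ⟪a, a - b⟫ - ‖b‖ ^ (p - 2) * ⟪b, a - b⟫ := by
  have rpow_pred : ∀ x : ℝ, 0 ≤ x → x ^ (p - 1) = x ^ (p - 2) * x := fun x hx => by
    rw [← Real.rpow_add_one' hx (by linarith)]; ring_nf
  have hsplit : ‖a‖ ^ (p - 2) * ⟪a, a - b⟫ - ‖b‖ ^ (p - 2) * ⟪b, a - b⟫ =
      (‖a‖ ^ (p - 1) - ‖b‖ ^ (p - 1)) * (‖a‖ - ‖b‖) +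
        (‖a‖ ^ (p - 2) + ‖b‖ ^ (p - 2)) * (‖a‖ * ‖b‖ - ⟪a, b⟫) := by
    rw [inner_sub_right, inner_sub_right, real_inner_self_eq_norm_sq, real_inner_self_eq_norm_sq,
      real_inner_comm b a, rpow_pred _ (norm_nonneg a), rpow_pred _ (norm_nonneg b)]
    ring
  have hcs : 0 ≤ (‖a‖ ^ (p - 2) + ‖b‖ ^ (p - 2)) * (‖a‖ * ‖b‖ - ⟪a, b⟫) :=
    mul_nonneg (by positivity) (sub_nonneg.2 (real_inner_le_norm a b))
  rw [hsplit]
  rcases lt_trichotomy ‖a‖ ‖b‖ with hlt | heq | hgt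
  · nlinarith [Real.rpow_lt_rpow (norm_nonneg a) hlt (by linarith : 0 < p - 1)]
  · have ha : 0 < ‖a‖ := by
      by_contra! h
      exact hab ((norm_le_zero_iff.1 h).trans (norm_le_zero_iff.1 (heq ▸ h)).symm)
    -- with equal norms the gap is `‖a‖^(p-2) ‖a - b‖²`
    have hd : 0 < ‖a‖ ^ 2 - 2 * ⟪a, b⟫ + ‖b‖ ^ 2 := by
      rw [← norm_sub_sq_real]; positivity [sub_ne_zero.2 hab]
    rw [← heq] at hd ⊢
    nlinarith [mul_pos (Real.rpow_pos_of_pos ha (p - 2)) hd]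
  · nlinarith [Real.rpow_lt_rpow (norm_nonneg b) hgt (by linarith : 0 < p - 1)]

section Gradient

variable {F : Type*} [NormedAddCommGroup F] [InnerProductSpace ℝ F] [CompleteSpace F]

theorem gradient_fun_sub {f g : F → ℝ} {x : F} (hf : DifferentiableAt ℝ f x)
    (hg : DifferentiableAt ℝ g x) :
    gradient (fun y => f y - g y) x = gradient f x - gradient g x := by
  rw [gradient, fderiv_fun_sub hf hg, map_sub]
  rfl

theorem measurable_gradient [FiniteDimensional ℝ F] [MeasurableSpace F] [BorelSpace F]
    (f : F → ℝ) : Measurable (gradient f) :=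
  (InnerProductSpace.toDual ℝ F).symm.continuous.measurable.comp (measurable_fderiv ℝ f)

end Gradient

theorem integrable_norm_rpow_sub {α E : Type*} [MeasurableSpace α] [NormedAddCommGroup E]
    {μ : Measure α} {f g : α → E} {p : ℝ} (hp : 0 < p)
    (hfm : AEStronglyMeasurable f μ) (hgm : AEStronglyMeasurable g μ)
    (hf : Integrable (fun x => ‖f x‖ ^ p) μ) (hg : Integrable (fun x => ‖g x‖ ^ p) μ) :
    Integrable (fun x => ‖f x - g x‖ ^ p) μ := by
  have hp₀ : ENNReal.ofReal p ≠ 0 := by simpa using hp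
  have iff_memLp {h : α → E} (hh : AEStronglyMeasurable h μ) :=
    ENNReal.toReal_ofReal hp.le ▸ integrable_norm_rpow_iff hh hp₀ ENNReal.ofReal_ne_top
  exact (iff_memLp (hfm.sub hgm)).2 (((iff_memLp hfm).1 hf).sub ((iff_memLp hgm).1 hg))

section ConstantOfAeFDerivZero

variable {E : Type*} [NormedAddCommGroup E] [NormedSpace ℝ E]
  {G : Type*} [NormedAddCommGroup G] [NormedSpace ℝ G] [CompleteSpace G]

theorem eq_of_ae_fderiv_lineMap_eq_zero {w : E → G} (hw : Differentiable ℝ w) {z x : E}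
    (h : ∀ᵐ t : ℝ, fderiv ℝ w (lineMap z x t) = 0) : w x = w z := by
  have hderiv : ∀ t ∈ Set.uIcc (0 : ℝ) 1,
      HasDerivAt (fun t : ℝ => w (lineMap z x t)) (fderiv ℝ w (lineMap z x t) (x - z)) t :=
    fun t _ => (hw _).hasFDerivAt.comp_hasDerivAt t hasDerivAt_lineMap
  have hzero : (fun t : ℝ => fderiv ℝ w (lineMap z x t) (x - z)) =ᵐ[volume] 0 := by
    filter_upwards [h] with t ht
    simp [ht]
  have hftc := intervalIntegral.integral_eq_sub_of_hasDerivAt hderiv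
    ((intervalIntegrable_const (c := (0 : G))).congr_ae (hzero.symm.filter_mono ae_restrict_le))
  rw [intervalIntegral.integral_congr_ae (hzero.mono fun t ht _ => ht)] at hftc
  simpa [sub_eq_zero, eq_comm] using hftc

variable [FiniteDimensional ℝ E] [MeasurableSpace E] [BorelSpace E]
  (μ : Measure E) [μ.IsAddHaarMeasure]

theorem addHaar_preimage_homothety_eq_zero (q : E) {r : ℝ} (hr : r ≠ 0) {s : Set E}
    (hs : μ s = 0) : μ (homothety q r ⁻¹' s) = 0 := by
  change μ (AffineEquiv.homothetyUnitsMulHom q (Units.mk0 r hr) ⁻¹' s) = 0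
  rw [← AffineEquiv.image_symm, AffineEquiv.coe_homothetyUnitsMulHom_apply_symm,
    Measure.addHaar_image_homothety, hs, mul_zero]

theorem ae_ae_lineMap_of_ae (q : E) {P : E → Prop} (h : ∀ᵐ x ∂μ, P x) :
    ∀ᵐ z ∂μ, ∀ᵐ t : ℝ, P (lineMap z q t) := by
  set S := toMeasurable μ {x | ¬P x}
  have hS : μ S = 0 := by rw [measure_toMeasurable]; exact ae_iff.1 h
  have hcont : Continuous fun zt : E × ℝ => lineMap zt.1 q zt.2 := by
    simp only [lineMap_apply_module]; fun_prop
  suffices ∀ᵐ z ∂μ, ∀ᵐ t : ℝ, lineMap z q t ∉ S by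
    filter_upwards [this] with z hz
    filter_upwards [hz] with t ht
    by_contra hP
    exact ht (subset_toMeasurable μ _ hP)
  -- Fubini: for each fixed `t ≠ 1`, `z ↦ lineMap z q t` is a homothety centred at `q`
  rw [Measure.ae_ae_comm (hcont.measurable (measurableSet_toMeasurable μ _)).compl]
  filter_upwards [compl_mem_ae_iff.2 (measure_singleton (μ := volume) (1 : ℝ))]
    with t (ht : t ≠ 1)
  have hslice : {z | lineMap z q t ∈ S} = homothety q (1 - t) ⁻¹' S := by
    ext z
    simp [homothety_eq_lineMap, lineMap_apply_one_sub]
  rw [ae_iff]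
  simpa [hslice] using addHaar_preimage_homothety_eq_zero μ q (sub_ne_zero.2 ht.symm) hS

theorem is_const_of_ae_fderiv_eq_zero {w : E → G} (hw : Differentiable ℝ w)
    (h : ∀ᵐ x ∂μ, fderiv ℝ w x = 0) (x y : E) : w x = w y := by
  obtain ⟨z, hzx, hzy⟩ := ((ae_ae_lineMap_of_ae μ x h).and (ae_ae_lineMap_of_ae μ y h)).exists
  rw [eq_of_ae_fderiv_lineMap_eq_zero hw hzx, eq_of_ae_fderiv_lineMap_eq_zero hw hzy]

end ConstantOfAeFDerivZero

theorem WeakPLaplace.ae_gradient_eq {n : ℕ} {p : ℝ} (hp : 1 < p)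
    {x0 y0 : EuclideanSpace ℝ (Fin n)} {u v : EuclideanSpace ℝ (Fin n) → ℝ}
    (hu : Differentiable ℝ u) (hv : Differentiable ℝ v)
    (hui : Integrable (fun x => ‖gradient u x‖ ^ p))
    (hvi : Integrable (fun x => ‖gradient v x‖ ^ p)) {cu cv : ℝ}
    (hwu : WeakPLaplace n p u x0 y0 cu) (hwv : WeakPLaplace n p v x0 y0 cv)
    (h0 : u x0 = v x0) (h1 : u y0 = v y0) :
    ∀ᵐ x, gradient u x = gradient v x := by
  set w := fun x => u x - v x
  have hgw (x) : gradient w x = gradient u x - gradient v x := gradient_fun_sub (hu x) (hv x)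
  have hwi : Integrable (fun x => ‖gradient w x‖ ^ p) := by
    simpa only [hgw] using integrable_norm_rpow_sub (by linarith)
      (measurable_gradient u).aestronglyMeasurable (measurable_gradient v).aestronglyMeasurable
      hui hvi
  obtain ⟨hui', hu_eq⟩ := hwu w (hu.sub hv) hwi
  obtain ⟨hvi', hv_eq⟩ := hwv w (hu.sub hv) hwi
  set gap := fun x => ‖gradient u x‖ ^ (p - 2) * ⟪gradient u x, gradient w x⟫ -
    ‖gradient v x‖ ^ (p - 2) * ⟪gradient v x, gradient w x⟫
  have gap_pos {x} (hx : gradient u x ≠ gradient v x) : 0 < gap x := by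
    simpa only [gap, hgw] using norm_rpow_mul_inner_sub_pos hp hx
  have gap_nonneg : 0 ≤ gap := fun x => by
    by_cases hx : gradient u x = gradient v x
    · simp [gap, hgw, hx]
    · exact (gap_pos hx).le
  have gap_integral : ∫ x, gap x = 0 := by
    rw [integral_sub hui' hvi', hu_eq, hv_eq]
    simp [w, h0, h1]
  filter_upwards [(integral_eq_zero_iff_of_nonneg gap_nonneg (hui'.sub hvi')).1 gap_integral]
    with x hx
  by_contra hne
  exact (gap_pos hne).ne' hx

theorem weak_pde_uniqueness_general (n : ℕ) (hn : 1 ≤ n) (p : ℝ) (hp : (n : ℝ) < p)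
    (x0 y0 : EuclideanSpace ℝ (Fin n))
    (u v : EuclideanSpace ℝ (Fin n) → ℝ)
    (hu : Differentiable ℝ u) (hv : Differentiable ℝ v)
    (hui : Integrable (fun x => ‖gradient u x‖ ^ p))
    (hvi : Integrable (fun x => ‖gradient v x‖ ^ p))
    (cu cv : ℝ)
    (hwu : WeakPLaplace n p u x0 y0 cu)
    (hwv : WeakPLaplace n p v x0 y0 cv)
    (h0 : u x0 = v x0) (h1 : u y0 = v y0) :
    ∀ x, u x = v x := by
  have hp1 : 1 < p := lt_of_le_of_lt (by exact_mod_cast hn) hp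
  have hgrad := WeakPLaplace.ae_gradient_eq hp1 hu hv hui hvi hwu hwv h0 h1
  have hw_fderiv : ∀ᵐ x, fderiv ℝ (fun y => u y - v y) x = 0 := by
    filter_upwards [hgrad] with x hx
    rw [fderiv_fun_sub (hu x) (hv x), ← toDual_gradient, ← toDual_gradient, hx, sub_self]
  intro x
  have hconst := is_const_of_ae_fderiv_eq_zero volume (hu.sub hv) hw_fderiv x x0
  simpa [h0, sub_eq_zero] using hconst

/-- Uniqueness: two solutions of the weak p-Laplace identity at the same pair of points
which agree at those points agree everywhere. -/
theorem weak_pde_uniqueness (n : ℕ) (hn : 1 ≤ n) (p : ℝ) (hp : (n : ℝ) < p)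
    (x0 y0 : EuclideanSpace ℝ (Fin n)) (hxy : x0 ≠ y0)
    (u v : EuclideanSpace ℝ (Fin n) → ℝ)
    (hu : Differentiable ℝ u) (hv : Differentiable ℝ v)
    (hui : Integrable (fun x => ‖gradient u x‖ ^ p))
    (hvi : Integrable (fun x => ‖gradient v x‖ ^ p))
    (cu cv : ℝ)
    (hwu : WeakPLaplace n p u x0 y0 cu)
    (hwv : WeakPLaplace n p v x0 y0 cv)
    (h0 : u x0 = v x0) (h1 : u y0 = v y0) :
    ∀ x, u x = v x :=
  weak_pde_uniqueness_general n hn p hp x0 y0 u v hu hv hui hvi cu cv hwu hwv h0 h1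
end

section
/- Let n ≥ 2, n < p < ∞, C > 0, and let u : ℝⁿ → ℝ be differentiable with x ↦ ‖∇u(x)‖^p Lebesgue integrable. Suppose u satisfies the localized Morrey estimate: for all x, y ∈ ℝⁿ, |u(x) − u(y)| ≤ C ‖x − y‖^{1−n/p} (∫_{B_{‖x−y‖/2}((x+y)/2)} ‖∇u(z)‖^p dz)^{1/p}. Then for every R > 0 and all x, y ∈ ℝⁿ with ‖x‖ ≥ 2R and ‖y‖ ≥ 2R, one has |u(x) − u(y)| ≤ 9C (∫_{ℝⁿ \ B_R(0)} ‖∇u(z)‖^p dz)^{1/p} ‖x − y‖^{1−n/p}. -/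
/-!
If the ball with diameter `[x, y]` misses `B_R(0)`, the localized Morrey estimate applies
directly. Otherwise both points lie in the annulus `2R ≤ ‖·‖ < R + s`, where `s = ‖x - y‖`,
so `R < s`. We then go from `x` radially to the sphere of radius `3s/2`, along a great circle
of that sphere in six steps of angle at most `π/6`, and radially down to `y`. Each of these
eight steps has a diameter ball missing `B_R(0)`; the radial steps have length at most `3s/2`
and the arc steps at most `s`. As `0 ≤ 1 - n/p ≤ 1`, the costs add up to
`(3/2 + 6 + 3/2) C ‖∇u‖_{L^p(ℝⁿ ∖ B_R)} s^{1 - n/p}`.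
-/

open MeasureTheory Module Real
open scoped RealInnerProductSpace

section Normed

variable {E : Type*} [NormedAddCommGroup E] [NormedSpace ℝ E] {R : ℝ} {a b : E}

def DiameterBallOutside (R : ℝ) (a b : E) : Prop :=
  R + ‖a - b‖ / 2 ≤ ‖((1 : ℝ) / 2) • (a + b)‖

theorem diameterBallOutside_comm : DiameterBallOutside R a b ↔ DiameterBallOutside R b a := by
  rw [DiameterBallOutside, DiameterBallOutside, norm_sub_rev, add_comm a]

theorem DiameterBallOutside.ball_subset_compl (h : DiameterBallOutside R a b) :
    Metric.ball (((1 : ℝ) / 2) • (a + b)) (‖a - b‖ / 2) ⊆ (Metric.ball 0 R)ᶜ :=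
  (Metric.ball_disjoint_ball (by rw [dist_zero_right, add_comm]; exact h)).subset_compl_right

theorem norm_lt_of_not_diameterBallOutside (h : ¬DiameterBallOutside R a b) :
    ‖a‖ < R + ‖a - b‖ := by
  rw [DiameterBallOutside, not_le] at h
  calc ‖a‖ = ‖((1 : ℝ) / 2) • (a + b) + ((1 : ℝ) / 2) • (a - b)‖ := by congr 1; module
    _ ≤ ‖((1 : ℝ) / 2) • (a + b)‖ + ‖((1 : ℝ) / 2) • (a - b)‖ := norm_add_le _ _
    _ = ‖((1 : ℝ) / 2) • (a + b)‖ + ‖a - b‖ / 2 := by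
        rw [norm_smul (1 / 2 : ℝ) (a - b)]; norm_num; ring
    _ < R + ‖a - b‖ := by linarith

theorem diameterBallOutside_smul_smul {v : E} (hv : ‖v‖ = 1) {w r : ℝ} (hw : R ≤ w)
    (hr : R ≤ r) : DiameterBallOutside R (w • v) (r • v) := by
  rw [DiameterBallOutside, ← sub_smul, ← add_smul, smul_smul, norm_smul, norm_smul, hv,
    mul_one, mul_one, Real.norm_eq_abs, Real.norm_eq_abs]
  refine le_trans ?_ (le_abs_self _)
  cases abs_cases (w - r) <;> linarith

theorem abs_sub_le_of_diameterBallOutside [MeasurableSpace E] {μ : Measure E} {f : E → ℝ}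
    (hf : Integrable f μ) (hf0 : 0 ≤ f) {u : E → ℝ} {C α p : ℝ} (hC : 0 ≤ C) (hp : 0 ≤ p)
    (hM : ∀ x y : E, |u x - u y| ≤ C * ‖x - y‖ ^ α *
      (∫ z in Metric.ball (((1 : ℝ) / 2) • (x + y)) (‖x - y‖ / 2), f z ∂μ) ^ (1 / p))
    (hab : DiameterBallOutside R a b) :
    |u a - u b| ≤ C * (∫ z in (Metric.ball 0 R)ᶜ, f z ∂μ) ^ (1 / p) * ‖a - b‖ ^ α := by
  have hmono : ∫ z in Metric.ball (((1 : ℝ) / 2) • (a + b)) (‖a - b‖ / 2), f z ∂μ ≤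
      ∫ z in (Metric.ball 0 R)ᶜ, f z ∂μ :=
    setIntegral_mono_set hf.integrableOn (Filter.Eventually.of_forall hf0)
      hab.ball_subset_compl.eventuallyLE
  calc |u a - u b| ≤ C * ‖a - b‖ ^ α *
        (∫ z in Metric.ball (((1 : ℝ) / 2) • (a + b)) (‖a - b‖ / 2), f z ∂μ) ^ (1 / p) :=
        hM a b
    _ ≤ C * ‖a - b‖ ^ α * (∫ z in (Metric.ball 0 R)ᶜ, f z ∂μ) ^ (1 / p) := by
        gcongr
        exact integral_nonneg hf0
    _ = C * (∫ z in (Metric.ball 0 R)ᶜ, f z ∂μ) ^ (1 / p) * ‖a - b‖ ^ α := by ring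

theorem exists_norm_eq_one_eq_norm_smul {x : E} (hx : x ≠ 0) :
    ∃ a : E, ‖a‖ = 1 ∧ x = ‖x‖ • a :=
  ⟨‖x‖⁻¹ • x, norm_smul_inv_norm hx, (smul_inv_smul₀ (norm_ne_zero_iff.mpr hx) x).symm⟩

theorem abs_sub_smul_le_three_halves_mul {u : E → ℝ} {M α : ℝ}
    (hu : ∀ a b : E, DiameterBallOutside R a b → |u a - u b| ≤ M * ‖a - b‖ ^ α) (hM : 0 ≤ M)
    (hα0 : 0 ≤ α) (hα1 : α ≤ 1) {s w : ℝ} (hRw : R ≤ w) (hw0 : 0 ≤ w) (hws : w ≤ 2 * s)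
    (hRs : R ≤ s) {v : E} (hv : ‖v‖ = 1) :
    |u (w • v) - u ((3 / 2 * s) • v)| ≤ 3 / 2 * M * s ^ α := by
  have hs : 0 ≤ s := by linarith
  have hdist : ‖w • v - (3 / 2 * s) • v‖ ≤ 3 / 2 * s := by
    rw [← sub_smul, norm_smul, hv, mul_one, Real.norm_eq_abs, abs_le]
    constructor <;> linarith
  calc |u (w • v) - u ((3 / 2 * s) • v)| ≤ M * ‖w • v - (3 / 2 * s) • v‖ ^ α :=
        hu _ _ (diameterBallOutside_smul_smul hv hRw (by linarith))
    _ ≤ M * (3 / 2 * s) ^ α := by gcongr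
    _ = M * ((3 / 2) ^ α * s ^ α) := by rw [mul_rpow (by norm_num) hs]
    _ ≤ M * (3 / 2 * s ^ α) := by gcongr; exact rpow_le_self_of_one_le (by norm_num) hα1
    _ = 3 / 2 * M * s ^ α := by ring

end Normed

section InnerProduct

variable {E : Type*} [NormedAddCommGroup E] [InnerProductSpace ℝ E]

theorem exists_norm_eq_one_inner_eq_zero [FiniteDimensional ℝ E] (hE : 2 ≤ finrank ℝ E)
    (v : E) : ∃ e : E, ‖e‖ = 1 ∧ ⟪v, e⟫ = 0 := by
  have hspan : finrank ℝ (ℝ ∙ v) ≤ 1 := by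
    simpa using finrank_span_le_card (R := ℝ) ({v} : Set E)
  have hcompl : (ℝ ∙ v)ᗮ ≠ ⊥ := by
    intro h
    have := Submodule.finrank_add_finrank_orthogonal (ℝ ∙ v)
    rw [h, finrank_bot] at this
    omega
  obtain ⟨w, hw, hw0⟩ := Submodule.exists_mem_ne_zero_of_ne_bot hcompl
  refine ⟨‖w‖⁻¹ • w, norm_smul_inv_norm hw0, ?_⟩
  rw [inner_smul_right, Submodule.mem_orthogonal_singleton_iff_inner_right.mp hw, mul_zero]

noncomputable def circlePoint (a e : E) (β : ℝ) : E := cos β • a + sin β • e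

theorem exists_eq_circlePoint [FiniteDimensional ℝ E] (hE : 2 ≤ finrank ℝ E)
    {a b : E} (ha : ‖a‖ = 1) (hb : ‖b‖ = 1) :
    ∃ (e : E) (θ : ℝ), ‖e‖ = 1 ∧ ⟪a, e⟫ = 0 ∧ θ ∈ Set.Icc 0 π ∧ b = circlePoint a e θ := by
  set t := ⟪a, b⟫
  set w := b - t • a
  have haw : ⟪a, w⟫ = 0 := by
    simp [w, inner_sub_right, real_inner_smul_right, ha, t]
  have hw : ‖w‖ = √(1 - t ^ 2) := by
    have := norm_add_sq_eq_norm_sq_add_norm_sq_real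
      (show ⟪t • a, w⟫ = 0 by rw [real_inner_smul_left, haw, mul_zero])
    rw [show t • a + w = b by simp [w], hb, norm_smul, ha, Real.norm_eq_abs] at this
    rw [← Real.sqrt_sq (norm_nonneg w)]
    congr 1
    nlinarith [sq_abs t]
  have ht : |t| ≤ 1 := by simpa [ha, hb] using abs_real_inner_le_norm a b
  obtain ⟨e, he, hae, hwe⟩ : ∃ e : E, ‖e‖ = 1 ∧ ⟪a, e⟫ = 0 ∧ w = ‖w‖ • e := by
    by_cases hw0 : w = 0
    · obtain ⟨e, he, hae⟩ := exists_norm_eq_one_inner_eq_zero hE a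
      exact ⟨e, he, hae, by simp [hw0]⟩
    · refine ⟨‖w‖⁻¹ • w, norm_smul_inv_norm hw0, ?_, ?_⟩
      · rw [real_inner_smul_right, haw, mul_zero]
      · rw [smul_inv_smul₀ (norm_ne_zero_iff.mpr hw0)]
  refine ⟨e, arccos t, he, hae, ⟨arccos_nonneg t, arccos_le_pi t⟩, ?_⟩
  rw [circlePoint, cos_arccos (abs_le.mp ht).1 (abs_le.mp ht).2, sin_arccos, ← hw, ← hwe]
  simp [w]

section CirclePoint

variable {a e : E}

theorem norm_circlePoint (ha : ‖a‖ = 1) (he : ‖e‖ = 1) (hae : ⟪a, e⟫ = 0) (β : ℝ) :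
    ‖circlePoint a e β‖ = 1 := by
  rw [← sq_eq_sq₀ (norm_nonneg _) zero_le_one, circlePoint, norm_add_sq_real, norm_smul,
    norm_smul, ha, he, real_inner_smul_left, real_inner_smul_right, hae]
  simp

theorem circlePoint_add_circlePoint (m h : ℝ) :
    circlePoint a e (m - h) + circlePoint a e (m + h) = (2 * cos h) • circlePoint a e m := by
  simp only [circlePoint, cos_add, cos_sub, sin_add, sin_sub]
  module

theorem circlePoint_sub_circlePoint (m h : ℝ) :
    circlePoint a e (m - h) - circlePoint a e (m + h) =
      (2 * sin h) • circlePoint a e (m - π / 2) := by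
  simp only [circlePoint, cos_add, cos_sub, sin_add, sin_sub, cos_pi_div_two, sin_pi_div_two]
  module

-- With `ρ = 3s/2` and `R ≤ s` this gives `R + ρ sin η ≤ ρ cos η`: an arc step of angle `2η`
-- on the sphere of radius `ρ` has its diameter ball outside `B_R(0)`.
theorem two_add_three_mul_sin_le_three_mul_cos {η : ℝ} (h0 : 0 ≤ η) (h : η ≤ π / 12) :
    2 + 3 * sin η ≤ 3 * cos η := by
  nlinarith [sin_le h0, one_sub_sq_div_two_le_cos (x := η), pi_lt_d2]

theorem norm_sub_le_and_diameterBallOutside_circlePoint (ha : ‖a‖ = 1) (he : ‖e‖ = 1)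
    (hae : ⟪a, e⟫ = 0) {R s β η : ℝ} (hs : 0 ≤ s) (hRs : R ≤ s) (hη0 : 0 ≤ η)
    (hη : η ≤ π / 12) :
    ‖(3 / 2 * s) • circlePoint a e β - (3 / 2 * s) • circlePoint a e (β + 2 * η)‖ ≤ s ∧
      DiameterBallOutside R ((3 / 2 * s) • circlePoint a e β)
        ((3 / 2 * s) • circlePoint a e (β + 2 * η)) := by
  have hsin : 0 ≤ sin η := sin_nonneg_of_nonneg_of_le_pi hη0 (by linarith [pi_pos])
  have hcos : 0 ≤ cos η := cos_nonneg_of_mem_Icc ⟨by linarith [pi_pos], by linarith [pi_pos]⟩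
  have htrig := two_add_three_mul_sin_le_three_mul_cos hη0 hη
  have hchord : ‖(3 / 2 * s) • circlePoint a e β - (3 / 2 * s) • circlePoint a e (β + 2 * η)‖ =
      3 * s * sin η := by
    rw [← smul_sub, show β = (β + η) - η by ring, show β + η - η + 2 * η = (β + η) + η by ring,
      circlePoint_sub_circlePoint, smul_smul, norm_smul, norm_circlePoint ha he hae,
      Real.norm_eq_abs, abs_of_nonneg (by positivity)]
    ring
  have hmid : ‖((1 : ℝ) / 2) • ((3 / 2 * s) • circlePoint a e β +
      (3 / 2 * s) • circlePoint a e (β + 2 * η))‖ = 3 / 2 * s * cos η := by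
    rw [← smul_add, show β = (β + η) - η by ring, show β + η - η + 2 * η = (β + η) + η by ring,
      circlePoint_add_circlePoint, smul_smul, smul_smul, norm_smul, norm_circlePoint ha he hae,
      Real.norm_eq_abs, abs_of_nonneg (by positivity)]
    ring
  refine ⟨?_, ?_⟩
  · rw [hchord]
    nlinarith [mul_le_mul_of_nonneg_left (show 3 * sin η ≤ 1 by linarith [cos_le_one η]) hs]
  · rw [DiameterBallOutside, hchord, hmid]
    nlinarith [mul_le_mul_of_nonneg_left htrig hs]

end CirclePoint

section Chaining

variable [FiniteDimensional ℝ E] {u : E → ℝ} {M α R : ℝ}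
  (hu : ∀ a b : E, DiameterBallOutside R a b → |u a - u b| ≤ M * ‖a - b‖ ^ α)
include hu

theorem abs_smul_sub_smul_le_six_mul (hE : 2 ≤ finrank ℝ E) (hM : 0 ≤ M) (hα : 0 ≤ α) {s : ℝ}
    (hs : 0 ≤ s) (hRs : R ≤ s) {a b : E} (ha : ‖a‖ = 1) (hb : ‖b‖ = 1) :
    |u ((3 / 2 * s) • a) - u ((3 / 2 * s) • b)| ≤ 6 * M * s ^ α := by
  obtain ⟨e, θ, he, hae, ⟨hθ0, hθπ⟩, hbθ⟩ := exists_eq_circlePoint hE ha hb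
  set f : ℕ → ℝ := fun i => u ((3 / 2 * s) • circlePoint a e (i * (θ / 6)))
  have hstep (i : ℕ) : dist (f i) (f (i + 1)) ≤ M * s ^ α := by
    obtain ⟨hchord, hout⟩ := norm_sub_le_and_diameterBallOutside_circlePoint ha he hae
      (β := i * (θ / 6)) hs hRs (by positivity) (by linarith : θ / 12 ≤ π / 12)
    rw [show (i : ℝ) * (θ / 6) + 2 * (θ / 12) = ((i + 1 : ℕ) : ℝ) * (θ / 6) by push_cast; ring]
      at hchord hout
    exact (hu _ _ hout).trans (by gcongr)
  calc |u ((3 / 2 * s) • a) - u ((3 / 2 * s) • b)| = dist (f 0) (f 6) := by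
        simp [f, circlePoint, Real.dist_eq, hbθ, mul_div_cancel₀]
    _ ≤ ∑ i ∈ Finset.range 6, dist (f i) (f (i + 1)) := dist_le_range_sum_dist f 6
    _ ≤ ∑ i ∈ Finset.range 6, M * s ^ α := Finset.sum_le_sum fun i _ => hstep i
    _ = 6 * M * s ^ α := by rw [Finset.sum_const, Finset.card_range, nsmul_eq_mul]; ring

theorem abs_sub_le_nine_mul_of_norm_le_two_mul (hE : 2 ≤ finrank ℝ E) (hM : 0 ≤ M) (hα0 : 0 ≤ α)
    (hα1 : α ≤ 1) (hR : 0 < R) {s : ℝ} (hRs : R ≤ s) {x y : E} (hx : 2 * R ≤ ‖x‖)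
    (hxs : ‖x‖ ≤ 2 * s) (hy : 2 * R ≤ ‖y‖) (hys : ‖y‖ ≤ 2 * s) :
    |u x - u y| ≤ 9 * M * s ^ α := by
  obtain ⟨a, ha, hxa⟩ := exists_norm_eq_one_eq_norm_smul (norm_pos_iff.mp (by linarith) : x ≠ 0)
  obtain ⟨b, hb, hyb⟩ := exists_norm_eq_one_eq_norm_smul (norm_pos_iff.mp (by linarith) : y ≠ 0)
  have hxρ := abs_sub_smul_le_three_halves_mul hu hM hα0 hα1 (by linarith) (norm_nonneg x) hxs
    hRs ha
  have hρρ := abs_smul_sub_smul_le_six_mul hu hE hM hα0 (by linarith) hRs ha hb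
  have hρy := abs_sub_smul_le_three_halves_mul hu hM hα0 hα1 (by linarith) (norm_nonneg y) hys
    hRs hb
  rw [← hxa] at hxρ
  rw [← hyb, abs_sub_comm] at hρy
  linarith [abs_sub_le (u x) (u ((3 / 2 * s) • a)) (u y),
    abs_sub_le (u ((3 / 2 * s) • a)) (u ((3 / 2 * s) • b)) (u y)]

theorem abs_sub_le_nine_mul_of_two_mul_le_norm (hE : 2 ≤ finrank ℝ E) (hM : 0 ≤ M)
    (hα0 : 0 ≤ α) (hα1 : α ≤ 1) (hR : 0 < R) {x y : E} (hx : 2 * R ≤ ‖x‖)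
    (hy : 2 * R ≤ ‖y‖) : |u x - u y| ≤ 9 * M * ‖x - y‖ ^ α := by
  by_cases hxy : DiameterBallOutside R x y
  · calc |u x - u y| ≤ M * ‖x - y‖ ^ α := hu x y hxy
      _ ≤ 9 * M * ‖x - y‖ ^ α := by
        have : 0 ≤ M * ‖x - y‖ ^ α := by positivity
        linarith
  · have hxs := norm_lt_of_not_diameterBallOutside hxy
    have hys := norm_lt_of_not_diameterBallOutside (mt diameterBallOutside_comm.mpr hxy)
    rw [norm_sub_rev] at hys
    exact abs_sub_le_nine_mul_of_norm_le_two_mul hu hE hM hα0 hα1 hR (by linarith) hx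
      (by linarith) hy (by linarith)

end Chaining

end InnerProduct

theorem holder_estimate_large_points_general (n : ℕ) (hn : 2 ≤ n) (p : ℝ) (hp : (n : ℝ) < p)
    (C : ℝ) (hC : 0 < C)
    (u : EuclideanSpace ℝ (Fin n) → ℝ)
    (hui : Integrable (fun x => ‖gradient u x‖ ^ p))
    (hM : ∀ x y : EuclideanSpace ℝ (Fin n),
      |u x - u y| ≤ C * ‖x - y‖ ^ (1 - (n : ℝ) / p) *
        (∫ z in Metric.ball (((1 : ℝ) / 2) • (x + y)) (‖x - y‖ / 2),
          ‖gradient u z‖ ^ p) ^ (1 / p)) :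
    ∀ R : ℝ, 0 < R → ∀ x y : EuclideanSpace ℝ (Fin n), 2 * R ≤ ‖x‖ → 2 * R ≤ ‖y‖ →
      |u x - u y| ≤ 9 * C *
        (∫ z in (Metric.ball (0 : EuclideanSpace ℝ (Fin n)) R)ᶜ, ‖gradient u z‖ ^ p) ^ (1 / p) *
        ‖x - y‖ ^ (1 - (n : ℝ) / p) := by
  intro R hR x y hx hy
  have hp0 : 0 < p := (Nat.cast_nonneg n).trans_lt hp
  have hα0 : 0 ≤ 1 - (n : ℝ) / p := by rw [sub_nonneg, div_le_one hp0]; exact hp.le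
  have hα1 : 1 - (n : ℝ) / p ≤ 1 := sub_le_self _ (by positivity)
  have hstep := fun a b => abs_sub_le_of_diameterBallOutside (R := R) (a := a) (b := b) hui
    (fun z => by positivity) hC.le hp0.le hM
  calc |u x - u y| ≤ 9 * (C * (∫ z in (Metric.ball 0 R)ᶜ, ‖gradient u z‖ ^ p) ^ (1 / p)) *
        ‖x - y‖ ^ (1 - (n : ℝ) / p) :=
        abs_sub_le_nine_mul_of_two_mul_le_norm hstep (by rwa [finrank_euclideanSpace_fin])
          (mul_nonneg hC.le (rpow_nonneg (integral_nonneg fun z => by positivity) _))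
          hα0 hα1 hR hx hy
    _ = _ := by ring

/-- Estimate for the Hölder ratio at points of large norm: if `u` satisfies the localized
Morrey estimate, then for `‖x‖, ‖y‖ ≥ 2R` the Hölder quotient is controlled by the
`L^p` norm of `∇u` outside `B_R(0)`, up to a factor `9C`. -/
theorem holder_estimate_large_points (n : ℕ) (hn : 2 ≤ n) (p : ℝ) (hp : (n : ℝ) < p)
    (C : ℝ) (hC : 0 < C)
    (u : EuclideanSpace ℝ (Fin n) → ℝ) (hu : Differentiable ℝ u)
    (hui : Integrable (fun x => ‖gradient u x‖ ^ p))
    (hM : ∀ x y : EuclideanSpace ℝ (Fin n),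
      |u x - u y| ≤ C * ‖x - y‖ ^ (1 - (n : ℝ) / p) *
        (∫ z in Metric.ball (((1 : ℝ) / 2) • (x + y)) (‖x - y‖ / 2),
          ‖gradient u z‖ ^ p) ^ (1 / p)) :
    ∀ R : ℝ, 0 < R → ∀ x y : EuclideanSpace ℝ (Fin n), 2 * R ≤ ‖x‖ → 2 * R ≤ ‖y‖ →
      |u x - u y| ≤ 9 * C *
        (∫ z in (Metric.ball (0 : EuclideanSpace ℝ (Fin n)) R)ᶜ, ‖gradient u z‖ ^ p) ^ (1 / p) *
        ‖x - y‖ ^ (1 - (n : ℝ) / p) :=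
  holder_estimate_large_points_general n hn p hp C hC u hui hM
end
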